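/- arXiv:2605.15855 — 3 statements merged into one kernel-verified Lean document; each statement's English description precedes it below -/
import Mathlib

section
/- (Lemma 1, precise isotropic form.) Fix σ² ≥ 1 and r ∈ (0,1]. Then the map a ↦ 1 − ρ(σ², r, a) is antitone (nonincreasing) on (0,1]; equivalently, a ↦ ρ(σ², r, a) is monotone nondecreasing on (0,1]. Moreover, if σ² > 1 and r < 1 the monotonicity is strict. Since a = ᾱ_t increases toward 1 as the generation (reverse diffusion) progresses, this says the uncertainty score 1 − Corr(x_t^(i), x_{t+τ}^(i)) decreases monotonically during the generation process. -/
open Real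

/-- The same-component diffusion correlation `ρ(σ², r, a)` of the forward diffusion process
in the isotropic case `Σ = σ²·I`, with `ᾱ_t = a` and `ᾱ_{t+τ} = r·a` (Theorem 2 of the
paper):
`ρ(σ², r, a) = (√r·a·σ² + √r·(1 − a)) / √((a·σ² + 1 − a)·(r·a·σ² + 1 − r·a))`. -/
noncomputable def ρ (σ2 r a : ℝ) : ℝ :=
  (Real.sqrt r * a * σ2 + Real.sqrt r * (1 - a)) /
    Real.sqrt ((a * σ2 + 1 - a) * (r * a * σ2 + 1 - r * a))

lemma rho_eq (σ2 r a : ℝ) (hA : 0 < a * σ2 + 1 - a)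
    (hB : 0 < r * a * σ2 + 1 - r * a) :
    ρ σ2 r a = Real.sqrt r * Real.sqrt (a * σ2 + 1 - a) /
      Real.sqrt (r * a * σ2 + 1 - r * a) := by
  have hsA : (0:ℝ) < Real.sqrt (a * σ2 + 1 - a) := Real.sqrt_pos.mpr hA
  have hsB : (0:ℝ) < Real.sqrt (r * a * σ2 + 1 - r * a) := Real.sqrt_pos.mpr hB
  unfold ρ
  rw [Real.sqrt_mul hA.le,
    show Real.sqrt r * a * σ2 + Real.sqrt r * (1 - a)
      = Real.sqrt r * (a * σ2 + 1 - a) by ring,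
    mul_div_assoc, mul_div_assoc]
  congr 1
  rw [div_eq_div_iff (by positivity) hsB.ne', ← mul_assoc,
    Real.mul_self_sqrt hA.le]

lemma rho_le (σ2 r : ℝ) (hσ : 1 ≤ σ2) (hr0 : 0 < r) (hr1 : r ≤ 1)
    {a b : ℝ} (ha : 0 < a) (hab : a ≤ b) : ρ σ2 r a ≤ ρ σ2 r b := by
  have hb : 0 < b := lt_of_lt_of_le ha hab
  have hA1 : 0 < a * σ2 + 1 - a := by nlinarith
  have hA2 : 0 < b * σ2 + 1 - b := by nlinarith
  have hB1 : 0 < r * a * σ2 + 1 - r * a := by nlinarith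
  have hB2 : 0 < r * b * σ2 + 1 - r * b := by nlinarith
  rw [rho_eq _ _ _ hA1 hB1, rho_eq _ _ _ hA2 hB2,
    div_le_div_iff₀ (by positivity) (by positivity)]
  have key : (a * σ2 + 1 - a) * (r * b * σ2 + 1 - r * b)
      ≤ (b * σ2 + 1 - b) * (r * a * σ2 + 1 - r * a) := by nlinarith [mul_nonneg (mul_nonneg (sub_nonneg.mpr hσ) (sub_nonneg.mpr hr1)) (sub_nonneg.mpr hab)]
  calc Real.sqrt r * Real.sqrt (a * σ2 + 1 - a) * Real.sqrt (r * b * σ2 + 1 - r * b)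
      = Real.sqrt r * Real.sqrt ((a * σ2 + 1 - a) * (r * b * σ2 + 1 - r * b)) := by
        rw [Real.sqrt_mul hA1.le]; ring
    _ ≤ Real.sqrt r * Real.sqrt ((b * σ2 + 1 - b) * (r * a * σ2 + 1 - r * a)) := by
        apply mul_le_mul_of_nonneg_left (Real.sqrt_le_sqrt key) (Real.sqrt_nonneg r)
    _ = Real.sqrt r * Real.sqrt (b * σ2 + 1 - b) * Real.sqrt (r * a * σ2 + 1 - r * a) := by
        rw [Real.sqrt_mul hA2.le]; ring

lemma rho_lt (σ2 r : ℝ) (hσ : 1 < σ2) (hr0 : 0 < r) (hr1 : r < 1)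
    {a b : ℝ} (ha : 0 < a) (hab : a < b) : ρ σ2 r a < ρ σ2 r b := by
  have hb : 0 < b := lt_trans ha hab
  have hA1 : 0 < a * σ2 + 1 - a := by nlinarith
  have hA2 : 0 < b * σ2 + 1 - b := by nlinarith
  have hB1 : 0 < r * a * σ2 + 1 - r * a := by nlinarith
  have hB2 : 0 < r * b * σ2 + 1 - r * b := by nlinarith
  rw [rho_eq _ _ _ hA1 hB1, rho_eq _ _ _ hA2 hB2,
    div_lt_div_iff₀ (by positivity) (by positivity)]
  have key : (a * σ2 + 1 - a) * (r * b * σ2 + 1 - r * b)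
      < (b * σ2 + 1 - b) * (r * a * σ2 + 1 - r * a) := by nlinarith [mul_pos (mul_pos (sub_pos.mpr hσ) (sub_pos.mpr hr1)) (sub_pos.mpr hab)]
  calc Real.sqrt r * Real.sqrt (a * σ2 + 1 - a) * Real.sqrt (r * b * σ2 + 1 - r * b)
      = Real.sqrt r * Real.sqrt ((a * σ2 + 1 - a) * (r * b * σ2 + 1 - r * b)) := by
        rw [Real.sqrt_mul hA1.le]; ring
    _ < Real.sqrt r * Real.sqrt ((b * σ2 + 1 - b) * (r * a * σ2 + 1 - r * a)) := by
        apply mul_lt_mul_of_pos_left (Real.sqrt_lt_sqrt (by positivity) key)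
          (Real.sqrt_pos.mpr hr0)
    _ = Real.sqrt r * Real.sqrt (b * σ2 + 1 - b) * Real.sqrt (r * a * σ2 + 1 - r * a) := by
        rw [Real.sqrt_mul hA2.le]; ring

/-- (Lemma 1, precise isotropic form.) Fix `σ² ≥ 1` and `r ∈ (0,1]`. Then the map
`a ↦ 1 − ρ(σ², r, a)` is antitone (nonincreasing) on `(0,1]`; equivalently,
`a ↦ ρ(σ², r, a)` is monotone nondecreasing on `(0,1]`. Moreover, if `σ² > 1` and `r < 1`
the monotonicity is strict. Since `a = ᾱ_t` increases toward `1` as the generation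
(reverse diffusion) progresses, this says the uncertainty score
`1 − Corr(x_t^(i), x_{t+τ}^(i))` decreases monotonically during the generation process. -/
theorem stmt_9 (σ2 r : ℝ) (hσ : 1 ≤ σ2) (hr : r ∈ Set.Ioc (0 : ℝ) 1) :
    AntitoneOn (fun a => 1 - ρ σ2 r a) (Set.Ioc (0 : ℝ) 1) ∧
    MonotoneOn (fun a => ρ σ2 r a) (Set.Ioc (0 : ℝ) 1) ∧
    (1 < σ2 → r < 1 →
      StrictAntiOn (fun a => 1 - ρ σ2 r a) (Set.Ioc (0 : ℝ) 1) ∧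
      StrictMonoOn (fun a => ρ σ2 r a) (Set.Ioc (0 : ℝ) 1)) := by
  obtain ⟨hr0, hr1⟩ := hr
  refine ⟨?_, ?_, fun hσ' hr' => ⟨?_, ?_⟩⟩
  · intro a ha b hb hab
    simpa using sub_le_sub_left (rho_le σ2 r hσ hr0 hr1 ha.1 hab) 1
  · intro a ha b hb hab
    exact rho_le σ2 r hσ hr0 hr1 ha.1 hab
  · intro a ha b hb hab
    simpa using sub_lt_sub_left (rho_lt σ2 r hσ' hr0 hr' ha.1 hab) 1
  · intro a ha b hb hab
    exact rho_lt σ2 r hσ' hr0 hr' ha.1 hab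
end

section
/- Fix σ² > 0 and a ∈ (0,1]. Then the map r ↦ ρ(σ², r, a) is strictly increasing on (0,1]; that is, for fixed noise level a, latents at closer timesteps (larger ratio r = ᾱ_{t+τ}/ᾱ_t) are strictly more correlated. -/
open Real

/-- Fix `σ² > 0` and `a ∈ (0,1]`. Then the map `r ↦ ρ(σ², r, a)` is strictly increasing
on `(0,1]`: for fixed noise level `a`, latents at closer timesteps (larger ratio
`r = ᾱ_{t+τ}/ᾱ_t`) are strictly more correlated. -/
theorem stmt_10 (σ2 a : ℝ) (hσ : 0 < σ2) (ha : a ∈ Set.Ioc (0 : ℝ) 1) :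
    StrictMonoOn (fun r => ρ σ2 r a) (Set.Ioc (0 : ℝ) 1) := by
  obtain ⟨ha0, ha1⟩ := ha
  intro r1 hr1 r2 hr2 h12
  obtain ⟨hr10, hr11⟩ := hr1
  obtain ⟨hr20, hr21⟩ := hr2
  have hC : 0 < a * σ2 + 1 - a := by nlinarith
  have hD1 : 0 < r1 * a * σ2 + 1 - r1 * a := by nlinarith
  have hD2 : 0 < r2 * a * σ2 + 1 - r2 * a := by nlinarith
  have hden1 : 0 < Real.sqrt ((a * σ2 + 1 - a) * (r1 * a * σ2 + 1 - r1 * a)) :=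
    Real.sqrt_pos.mpr (mul_pos hC hD1)
  have hden2 : 0 < Real.sqrt ((a * σ2 + 1 - a) * (r2 * a * σ2 + 1 - r2 * a)) :=
    Real.sqrt_pos.mpr (mul_pos hC hD2)
  simp only [ρ]
  rw [div_lt_div_iff₀ hden1 hden2]
  have hnum1 : Real.sqrt r1 * a * σ2 + Real.sqrt r1 * (1 - a)
      = Real.sqrt r1 * (a * σ2 + 1 - a) := by ring
  have hnum2 : Real.sqrt r2 * a * σ2 + Real.sqrt r2 * (1 - a)
      = Real.sqrt r2 * (a * σ2 + 1 - a) := by ring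
  rw [hnum1, hnum2]
  have key : Real.sqrt (r1 * ((a * σ2 + 1 - a) * (r2 * a * σ2 + 1 - r2 * a)))
      < Real.sqrt (r2 * ((a * σ2 + 1 - a) * (r1 * a * σ2 + 1 - r1 * a))) := by
    apply Real.sqrt_lt_sqrt (by positivity)
    nlinarith [mul_pos hC hD1, mul_pos hC hD2]
  have e1 : Real.sqrt r1 * Real.sqrt ((a * σ2 + 1 - a) * (r2 * a * σ2 + 1 - r2 * a))
      = Real.sqrt (r1 * ((a * σ2 + 1 - a) * (r2 * a * σ2 + 1 - r2 * a))) := by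
    rw [Real.sqrt_mul hr10.le]
  have e2 : Real.sqrt r2 * Real.sqrt ((a * σ2 + 1 - a) * (r1 * a * σ2 + 1 - r1 * a))
      = Real.sqrt (r2 * ((a * σ2 + 1 - a) * (r1 * a * σ2 + 1 - r1 * a))) := by
    rw [Real.sqrt_mul hr20.le]
  calc Real.sqrt r1 * (a * σ2 + 1 - a) *
        Real.sqrt ((a * σ2 + 1 - a) * (r2 * a * σ2 + 1 - r2 * a))
      = (a * σ2 + 1 - a) *
        Real.sqrt (r1 * ((a * σ2 + 1 - a) * (r2 * a * σ2 + 1 - r2 * a))) := by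
        rw [← e1]; ring
    _ < (a * σ2 + 1 - a) *
        Real.sqrt (r2 * ((a * σ2 + 1 - a) * (r1 * a * σ2 + 1 - r1 * a))) := by
        exact mul_lt_mul_of_pos_left key hC
    _ = Real.sqrt r2 * (a * σ2 + 1 - a) *
        Real.sqrt ((a * σ2 + 1 - a) * (r1 * a * σ2 + 1 - r1 * a)) := by
        rw [← e2]; ring
end

section
/- Fix σ² ≥ 1 and r ∈ (0,1]. Then for every a ∈ (0,1], the same-component diffusion correlation is bounded between its high-noise and low-noise endpoint values: √r ≤ ρ(σ², r, a) ≤ √( r·σ² / (r·(σ² − 1) + 1) ), where the upper bound is the value ρ(σ², r, 1) attained at a = 1. -/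
open Real

/-! Writing `s = σ² − 1`, the square of the correlation is `r (1 + a s) / (1 + r a s)`, a
Möbius function of `a` that is nondecreasing because `r ≤ 1`. Its values at `a = 0` and
`a = 1` are the two bounds. -/

lemma sqrt_mul_div_sqrt_mul {r x : ℝ} (hr : 0 ≤ r) (hx : 0 ≤ x) (y : ℝ) :
    √r * x / √(x * y) = √(r * x / y) := by
  rcases hx.eq_or_lt with rfl | hx
  · simp
  have hsx : √x * √x = x := mul_self_sqrt hx.le
  rw [sqrt_mul hx.le, sqrt_div (mul_nonneg hr hx.le), sqrt_mul hr]
  nth_rw 1 [← hsx]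
  field_simp

noncomputable def rhoSq (σ2 r a : ℝ) : ℝ :=
  r * (a * σ2 + 1 - a) / (r * a * σ2 + 1 - r * a)

lemma rho_eq_sqrt_rhoSq {σ2 r a : ℝ} (hr : 0 ≤ r) (hA : 0 ≤ a * σ2 + 1 - a) :
    ρ σ2 r a = √(rhoSq σ2 r a) := by
  rw [ρ, rhoSq, ← sqrt_mul_div_sqrt_mul hr hA]
  ring_nf

lemma rhoSq_monotoneOn {σ2 r : ℝ} (hσ : 1 ≤ σ2) (hr0 : 0 ≤ r) (hr1 : r ≤ 1) :
    MonotoneOn (rhoSq σ2 r) (Set.Ici 0) := by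
  intro a (ha : 0 ≤ a) b (hb : 0 ≤ b) hab
  have hs : 0 ≤ σ2 - 1 := sub_nonneg.2 hσ
  have hBa : 0 < r * a * σ2 + 1 - r * a := by nlinarith [mul_nonneg (mul_nonneg hr0 ha) hs]
  have hBb : 0 < r * b * σ2 + 1 - r * b := by nlinarith [mul_nonneg (mul_nonneg hr0 hb) hs]
  rw [rhoSq, rhoSq, div_le_div_iff₀ hBa hBb]
  -- the cross difference is `r (1 - r) (σ² - 1) (b - a)`
  nlinarith [mul_nonneg (mul_nonneg (mul_nonneg hr0 (sub_nonneg.2 hr1)) hs) (sub_nonneg.2 hab)]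

/-- Fix `σ² ≥ 1` and `r ∈ (0,1]`. Then for every `a ∈ (0,1]`, the same-component
diffusion correlation is bounded between its high-noise and low-noise endpoint values:
`√r ≤ ρ(σ², r, a) ≤ √( r·σ² / (r·(σ² − 1) + 1) )`, where the upper bound is the value
`ρ(σ², r, 1)` attained at `a = 1`. -/
theorem stmt_12 (σ2 r : ℝ) (hσ : 1 ≤ σ2) (hr : r ∈ Set.Ioc (0 : ℝ) 1) :
    (∀ a ∈ Set.Ioc (0 : ℝ) 1,
      Real.sqrt r ≤ ρ σ2 r a ∧
        ρ σ2 r a ≤ Real.sqrt (r * σ2 / (r * (σ2 - 1) + 1))) ∧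
    ρ σ2 r 1 = Real.sqrt (r * σ2 / (r * (σ2 - 1) + 1)) := by
  obtain ⟨hr0, hr1⟩ := hr
  have hmono := rhoSq_monotoneOn hσ hr0.le hr1
  have hρ : ∀ a : ℝ, 0 ≤ a → ρ σ2 r a = √(rhoSq σ2 r a) := fun a ha =>
    rho_eq_sqrt_rhoSq hr0.le (by nlinarith)
  have h0 : rhoSq σ2 r 0 = r := by simp [rhoSq]
  have h1 : rhoSq σ2 r 1 = r * σ2 / (r * (σ2 - 1) + 1) := by rw [rhoSq]; ring_nf
  refine ⟨fun a ⟨ha0, ha1⟩ => ?_, by rw [hρ 1 zero_le_one, h1]⟩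
  rw [hρ a ha0.le]
  constructor
  · calc √r = √(rhoSq σ2 r 0) := by rw [h0]
      _ ≤ √(rhoSq σ2 r a) := sqrt_le_sqrt (hmono (Set.mem_Ici.2 le_rfl) ha0.le ha0.le)
  · calc √(rhoSq σ2 r a) ≤ √(rhoSq σ2 r 1) :=
          sqrt_le_sqrt (hmono ha0.le (Set.mem_Ici.2 zero_le_one) ha1)
      _ = _ := by rw [h1]
end
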